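/- arXiv:0708.0197 — 2 statements merged into one kernel-verified Lean document; each statement's English description precedes it below -/
import Mathlib

section
/- Let n ≥ 3, N = ⌊(n−1)/2⌋, 1 ≤ i ≤ j ≤ N, and let a_i ∈ {±λ_i}, a_j ∈ {±λ_j} with a_i + a_j ≠ 0. Then (i) L_{n0}(a_i + a_j) ≤ n c_{ijn}/(2π), and (ii) for each 0 < d < 1 there is a constant C(d), independent of n, i, j, such that L_{n1}(a_i + a_j) ≤ min{ log(nπ) L_{n0}(a_i + a_j), n C(d) (c_{ijn})^d }. -/
open Real Filter Topology

noncomputable section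

/-- The Fourier frequency `λ_j = 2πj/n`. -/
def ff (n j : ℕ) : ℝ := 2 * π * j / n

/-- The base function of `L_{ns}` on `Π = [−π, π]`:
`e^{−s} n` for `|λ| ≤ e^s/n` and `(log(n|λ|))^s / |λ|` otherwise. -/
def Lbase (n s : ℕ) (x : ℝ) : ℝ :=
  if |x| ≤ Real.exp s / n then Real.exp (-(s : ℝ)) * n
  else (Real.log (n * |x|)) ^ s / |x|

/-- `L_{ns} : ℝ → ℝ`, the 2π-periodic extension of `Lbase n s` (using the representative
of `λ` modulo `2π` lying in `(−π, π]`). -/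
def Lfun (n s : ℕ) (lam : ℝ) : ℝ := Lbase n s (toIocMod Real.two_pi_pos (-π) lam)

end

/-! Both frequencies are multiples of `2π/n`, so `a_i + a_j` reduces modulo `2π` to `±2πk/n`,
where `k = 1/c_{ijn}` is an integer with `1 ≤ k ≤ n/2`. At such a point `L_{n0} = n/(2πk)` and
`L_{n1} = log(2πk) · n/(2πk)` exactly, because `2πk > e`. Hence (i) holds with equality, the first
bound of (ii) is `2k ≤ n`, and the second is `log y ≤ y^(1-d)/(1-d)` at `y = 2πk`, giving
`C(d) = (2π)^(-d)/(1-d)`. -/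

open AddCommGroup

/-- The paper's `c_{ijn}`, with `si, sj ∈ {±1}` the signs of `a_i, a_j`. -/
noncomputable def cijn (n i j : ℕ) (si sj : ℝ) : ℝ :=
  if si ≠ sj then ((j : ℝ) - (i : ℝ))⁻¹
  else if (i : ℝ) + (j : ℝ) ≤ (n : ℝ) / 2 then ((j : ℝ) + (i : ℝ))⁻¹
  else ((n : ℝ) - (j : ℝ) - (i : ℝ))⁻¹

theorem cijn_of_ne {n i j : ℕ} {si sj : ℝ} (h : si ≠ sj) : cijn n i j si sj = ((j : ℝ) - i)⁻¹ :=
  if_pos h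

theorem cijn_self (n i j : ℕ) (si : ℝ) :
    cijn n i j si si = if ((i + j : ℕ) : ℝ) ≤ (n : ℝ) / 2 then ((i + j : ℕ) : ℝ)⁻¹
      else ((n : ℝ) - (i + j : ℕ))⁻¹ := by
  simp only [cijn, ne_eq, not_true_eq_false, if_false, Nat.cast_add, add_comm (j : ℝ),
    sub_sub]

theorem ff_add (n i j : ℕ) : ff n i + ff n j = ff n (i + j) := by
  simp only [ff, Nat.cast_add]; ring

theorem ff_sub {n i j : ℕ} (h : i ≤ j) : ff n j - ff n i = ff n (j - i) := by
  simp only [ff, Nat.cast_sub h]; ring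

theorem ff_nonneg (n k : ℕ) : 0 ≤ ff n k := by
  unfold ff; positivity

theorem ff_le_pi {n k : ℕ} (h : 2 * k ≤ n) : ff n k ≤ π := by
  rcases Nat.eq_zero_or_pos n with rfl | hn
  · simp [ff, pi_nonneg]
  · rw [ff, div_le_iff₀ (by positivity)]
    have : (2 * k : ℝ) ≤ n := by exact_mod_cast h
    nlinarith [pi_pos]

theorem ff_sub_two_pi {n k : ℕ} (hn : n ≠ 0) (h : k ≤ n) : ff n k - 2 * π = -ff n (n - k) := by
  simp only [ff, Nat.cast_sub h]
  field_simp
  ring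

theorem Lbase_abs (n s : ℕ) (x : ℝ) : Lbase n s |x| = Lbase n s x := by
  simp only [Lbase, abs_abs]

theorem Lbase_neg (n s : ℕ) (x : ℝ) : Lbase n s (-x) = Lbase n s x := by
  rw [← Lbase_abs, abs_neg, Lbase_abs]

theorem Lbase_of_exp_lt {n s : ℕ} {x : ℝ} (h : Real.exp s < n * |x|) :
    Lbase n s x = Real.log (n * |x|) ^ s / |x| := by
  have hn : (0 : ℝ) < n := pos_of_mul_pos_left ((exp_pos _).trans h) (abs_nonneg x)
  rw [Lbase, if_neg (by rw [not_le, div_lt_iff₀' hn]; exact h)]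

theorem Lbase_ff {n s k : ℕ} (hn : n ≠ 0) (h : Real.exp s < 2 * π * k) :
    Lbase n s (ff n k) = Real.log (2 * π * k) ^ s * (n / (2 * π * k)) := by
  have hff : n * |ff n k| = 2 * π * k := by
    rw [abs_of_nonneg (ff_nonneg n k), ff]; field_simp
  rw [Lbase_of_exp_lt (hff ▸ h), hff, abs_of_nonneg (ff_nonneg n k), ff, div_div_eq_mul_div,
    mul_div_assoc]

theorem exp_one_lt_two_pi_mul {k : ℕ} (hk : 1 ≤ k) : Real.exp 1 < 2 * π * k := by
  have : (1 : ℝ) ≤ k := by exact_mod_cast hk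
  nlinarith [exp_one_lt_d9, pi_gt_three]

theorem Lbase_ff_zero {n k : ℕ} (hn : n ≠ 0) (hk : 1 ≤ k) :
    Lbase n 0 (ff n k) = n / (2 * π * k) := by
  rw [Lbase_ff hn, pow_zero, one_mul]
  simpa using (exp_one_lt_two_pi_mul hk).trans' (exp_lt_exp.2 one_pos)

theorem Lbase_ff_one {n k : ℕ} (hn : n ≠ 0) (hk : 1 ≤ k) :
    Lbase n 1 (ff n k) = Real.log (2 * π * k) * (n / (2 * π * k)) := by
  rw [Lbase_ff hn (by simpa using exp_one_lt_two_pi_mul hk), pow_one]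

theorem Lfun_eq_Lbase_of_modEq {n s : ℕ} {x y : ℝ} (hy : |y| ≤ π) (h : y ≡ x [PMOD 2 * π]) :
    Lfun n s x = Lbase n s y := by
  obtain ⟨z, hz⟩ := modEq_iff_eq_add_zsmul.1 h
  have hred : toIocMod two_pi_pos (-π) x = toIocMod two_pi_pos (-π) y :=
    (toIocMod_eq_toIocMod _).2 ⟨-z, by rw [hz]; simp⟩
  rw [Lfun, hred]
  rcases (abs_le.1 hy).1.eq_or_lt with hπ | hπ
  · -- the representative of `-π` is `π`
    rw [← hπ, toIocMod_apply_left, ← Lbase_neg]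
    ring_nf
  · rw [(toIocMod_eq_self _).2 ⟨hπ, by linarith [(abs_le.1 hy).2]⟩]

theorem Lfun_neg (n s : ℕ) (x : ℝ) : Lfun n s (-x) = Lfun n s x := by
  set t := toIocMod two_pi_pos (-π) x
  have ht : |-t| ≤ π := by
    have := toIocMod_mem_Ioc two_pi_pos (-π) x
    rw [abs_neg, abs_le]
    exact ⟨this.1.le, by linarith [this.2]⟩
  have hmod : t ≡ x [PMOD 2 * π] :=
    modEq_iff_eq_add_zsmul.2 ⟨_, (toIocMod_add_toIocDiv_zsmul _ _ _).symm⟩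
  rw [Lfun_eq_Lbase_of_modEq ht hmod.neg, Lbase_neg, Lfun]

theorem Lfun_sign_mul {e : ℝ} (he : e = 1 ∨ e = -1) (n s : ℕ) (x : ℝ) :
    Lfun n s (e * x) = Lfun n s x := by
  rcases he with rfl | rfl <;> simp [Lfun_neg]

theorem Lfun_ff_of_two_mul_le {n k : ℕ} (h : 2 * k ≤ n) (s : ℕ) :
    Lfun n s (ff n k) = Lbase n s (ff n k) :=
  Lfun_eq_Lbase_of_modEq (by rw [abs_of_nonneg (ff_nonneg n k)]; exact ff_le_pi h) modEq_rfl

theorem Lfun_ff_of_lt_two_mul {n k : ℕ} (h : n < 2 * k) (hk : k ≤ n) (s : ℕ) :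
    Lfun n s (ff n k) = Lbase n s (ff n (n - k)) := by
  rw [← Lbase_neg, ← ff_sub_two_pi (by omega) hk]
  refine Lfun_eq_Lbase_of_modEq ?_ (modEq_iff_eq_add_zsmul.2 ⟨1, by simp⟩)
  rw [ff_sub_two_pi (by omega) hk, abs_neg, abs_of_nonneg (ff_nonneg _ _)]
  exact ff_le_pi (by omega)

theorem exists_Lfun_ff_eq {n m : ℕ} (hm1 : 1 ≤ m) (hm : m < n) :
    ∃ k : ℕ, 1 ≤ k ∧ 2 * k ≤ n ∧
      (if (m : ℝ) ≤ (n : ℝ) / 2 then (m : ℝ)⁻¹ else ((n : ℝ) - m)⁻¹) = (k : ℝ)⁻¹ ∧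
      ∀ s, Lfun n s (ff n m) = Lbase n s (ff n k) := by
  by_cases h : 2 * m ≤ n
  · refine ⟨m, hm1, h, if_pos ?_, Lfun_ff_of_two_mul_le h⟩
    rw [le_div_iff₀ two_pos]
    exact_mod_cast (by omega : m * 2 ≤ n)
  · refine ⟨n - m, by omega, by omega, ?_, Lfun_ff_of_lt_two_mul (by omega) hm.le⟩
    rw [if_neg, Nat.cast_sub hm.le]
    rw [not_le, div_lt_iff₀ two_pos]
    exact_mod_cast (by omega : n < m * 2)

theorem exists_Lfun_sum_eq {n i j : ℕ} (hi : 1 ≤ i) (hij : i ≤ j) (hj : 2 * j < n) {si sj : ℝ}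
    (hsi : si = 1 ∨ si = -1) (hsj : sj = 1 ∨ sj = -1) (hne : si * ff n i + sj * ff n j ≠ 0) :
    ∃ k : ℕ, 1 ≤ k ∧ 2 * k ≤ n ∧ cijn n i j si sj = (k : ℝ)⁻¹ ∧
      ∀ s, Lfun n s (si * ff n i + sj * ff n j) = Lbase n s (ff n k) := by
  by_cases hs : si = sj
  · subst hs
    obtain ⟨k, hk1, hkn, hc, hL⟩ := exists_Lfun_ff_eq (n := n) (m := i + j) (by omega) (by omega)
    refine ⟨k, hk1, hkn, (cijn_self n i j si).trans hc, fun s => ?_⟩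
    rw [← mul_add, Lfun_sign_mul hsi, ff_add, hL]
  · obtain rfl : sj = -si := by
      rcases hsi with rfl | rfl <;> rcases hsj with rfl | rfl <;> norm_num at *
    have hlt : i < j := hij.lt_of_ne (by rintro rfl; exact hne (by ring))
    refine ⟨j - i, by omega, by omega, by rw [cijn_of_ne hs, Nat.cast_sub hij], fun s => ?_⟩
    rw [show si * ff n i + -si * ff n j = -si * (ff n j - ff n i) by ring,
      Lfun_sign_mul (by rcases hsi with rfl | rfl <;> norm_num), ff_sub hij,
      Lfun_ff_of_two_mul_le (by omega)]

theorem log_mul_inv_le_rpow_neg {y d : ℝ} (hy : 0 < y) (hd : d < 1) :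
    Real.log y * y⁻¹ ≤ y ^ (-d) / (1 - d) := by
  have hd' : 0 < 1 - d := by linarith
  calc Real.log y * y⁻¹ ≤ y ^ (1 - d) / (1 - d) * y⁻¹ := by
        gcongr
        exact log_le_rpow_div hy.le hd'
    _ = y ^ (-d) / (1 - d) := by
        rw [rpow_sub hy, rpow_one, rpow_neg hy.le]
        field_simp

/-- **Lemma 1(i)–(ii)** (Nordman–Lahiri). For `n ≥ 3`, `1 ≤ i ≤ j ≤ N = ⌊(n−1)/2⌋`,
`a_i ∈ {±λ_i}`, `a_j ∈ {±λ_j}` with `a_i + a_j ≠ 0`: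
(i) `L_{n0}(a_i + a_j) ≤ n c_{ijn}/(2π)`; and
(ii) for each `0 < d < 1` there is a constant `C(d)`, independent of `n, i, j`, with
`L_{n1}(a_i + a_j) ≤ min{log(nπ) L_{n0}(a_i + a_j), n C(d) c_{ijn}^d}`. -/
theorem lfun_fourier_frequency_bounds :
    (∀ n : ℕ, 3 ≤ n → ∀ i j : ℕ, 1 ≤ i → i ≤ j → j ≤ (n - 1) / 2 →
      ∀ si sj : ℝ, (si = 1 ∨ si = -1) → (sj = 1 ∨ sj = -1) →
      si * ff n i + sj * ff n j ≠ 0 →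
      Lfun n 0 (si * ff n i + sj * ff n j) ≤
        (n : ℝ) * (if si ≠ sj then ((j : ℝ) - (i : ℝ))⁻¹
          else if (i : ℝ) + (j : ℝ) ≤ (n : ℝ) / 2 then ((j : ℝ) + (i : ℝ))⁻¹
          else ((n : ℝ) - (j : ℝ) - (i : ℝ))⁻¹) / (2 * π)) ∧
    (∀ d : ℝ, 0 < d → d < 1 → ∃ Cd : ℝ,
      ∀ n : ℕ, 3 ≤ n → ∀ i j : ℕ, 1 ≤ i → i ≤ j → j ≤ (n - 1) / 2 →
      ∀ si sj : ℝ, (si = 1 ∨ si = -1) → (sj = 1 ∨ sj = -1) →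
      si * ff n i + sj * ff n j ≠ 0 →
      Lfun n 1 (si * ff n i + sj * ff n j) ≤
        min (Real.log ((n : ℝ) * π) * Lfun n 0 (si * ff n i + sj * ff n j))
          ((n : ℝ) * Cd * (if si ≠ sj then ((j : ℝ) - (i : ℝ))⁻¹
            else if (i : ℝ) + (j : ℝ) ≤ (n : ℝ) / 2 then ((j : ℝ) + (i : ℝ))⁻¹
            else ((n : ℝ) - (j : ℝ) - (i : ℝ))⁻¹) ^ d)) := by
  constructor
  · intro n _ i j hi hij hjN si sj hsi hsj hne
    obtain ⟨k, hk, -, hc, hL⟩ := exists_Lfun_sum_eq hi hij (by omega) hsi hsj hne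
    change _ ≤ n * cijn n i j si sj / (2 * π)
    rw [hL, Lbase_ff_zero (by omega) hk, hc]
    exact le_of_eq (by field_simp)
  · intro d _ hd
    refine ⟨(2 * π) ^ (-d) / (1 - d), fun n _ i j hi hij hjN si sj hsi hsj hne => ?_⟩
    obtain ⟨k, hk, hkn, hc, hL⟩ := exists_Lfun_sum_eq hi hij (by omega) hsi hsj hne
    change _ ≤ min _ (n * _ * cijn n i j si sj ^ d)
    have hk0 : (0 : ℝ) < k := by exact_mod_cast hk
    rw [hL, hL, Lbase_ff_zero (by omega) hk, Lbase_ff_one (by omega) hk, hc]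
    refine le_min ?_ ?_
    · have hkn' : (2 * k : ℝ) ≤ n := by exact_mod_cast hkn
      exact mul_le_mul_of_nonneg_right (log_le_log (by positivity) (by nlinarith [pi_pos]))
        (by positivity)
    · calc Real.log (2 * π * k) * (n / (2 * π * k))
          = n * (Real.log (2 * π * k) * (2 * π * k)⁻¹) := by ring
        _ ≤ n * ((2 * π * k) ^ (-d) / (1 - d)) := by
          gcongr
          exact log_mul_inv_le_rpow_neg (by positivity) hd
        _ = n * ((2 * π) ^ (-d) / (1 - d)) * (k : ℝ)⁻¹ ^ d := by
          rw [mul_rpow (by positivity) hk0.le, inv_rpow hk0.le, rpow_neg hk0.le]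
          ring
end

section
/- There exists a constant C such that for all n ≥ 2 and all r_1, r_2 ∈ ℝ: ∫_{−π}^{π} L_{n0}(r_1 + λ) L_{n0}(r_2 − λ) dλ ≤ C L_{n1}(r_1 + r_2), and ∫_{−π}^{π} L_{n0}²(r_1 + λ) L_{n0}²(r_2 − λ) dλ ≤ C n L_{n0}²(r_1 + r_2). -/
open Real Filter Topology

/-!
Write `d x` for the distance from `x` to `2πℤ`. Then `L_{n0}(x) = 1 / max (d x) (1/n)`, and a
function of `d` integrates over a period to twice its integral over `[0, π]`, which reduces all
the integrals to elementary ones. Since `d (r₁ + r₂) ≤ d (r₁ + λ) + d (r₂ − λ)`, at each `λ` one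
of the two points is at distance at least `D / 2`, `D = d (r₁ + r₂)`, so the smaller factor is at
most `2 L_{n0}(r₁ + r₂)`; this gives the second bound. For the first bound with `D ≤ e/n`,
AM-GM and `∫ L_{n0}² ≤ 4n` suffice. For `D > e/n`, cap both factors at height `2/D`, which one
of them never exceeds: the product is at most `2/D` times the excess of the other over the cap,
plus half the sum of the squares of the capped factors. The excess integrates to `log (nD/2)`,
the capped squares to `O(1/D)`.
-/

open MeasureTheory intervalIntegral Set

noncomputable def circDist (x : ℝ) : ℝ := ‖(x : AddCircle (2 * π))‖

lemma circDist_nonneg (x : ℝ) : 0 ≤ circDist x := norm_nonneg _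

lemma circDist_eq_abs {x : ℝ} (hx : |x| ≤ π) : circDist x = |x| :=
  (AddCircle.norm_coe_eq_abs_iff _ two_pi_pos.ne').2 <| by
    rwa [abs_of_pos two_pi_pos, mul_div_cancel_left₀ π two_ne_zero]

lemma circDist_eq_abs_toIocMod (x : ℝ) : circDist x = |toIocMod two_pi_pos (-π) x| := by
  have hx : ((toIocMod two_pi_pos (-π) x : ℝ) : AddCircle (2 * π)) = x :=
    Real.Angle.coe_toIocMod x (-π)
  rw [circDist, ← hx]
  exact circDist_eq_abs (Real.Angle.abs_toReal_le_pi x)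

lemma circDist_le_pi (x : ℝ) : circDist x ≤ π := by
  have := AddCircle.norm_le_half_period _ (x := (x : AddCircle (2 * π))) two_pi_pos.ne'
  rwa [abs_of_pos two_pi_pos, mul_div_cancel_left₀ π two_ne_zero] at this

lemma circDist_add_le (x y : ℝ) : circDist (x + y) ≤ circDist x + circDist y := by
  simpa only [circDist, AddCircle.coe_add] using norm_add_le (x : AddCircle (2 * π)) y

lemma circDist_periodic : Function.Periodic circDist (2 * π) := fun x => by
  simp [circDist]

lemma continuous_circDist : Continuous circDist :=
  continuous_norm.comp (AddCircle.continuous_mk' _)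

lemma Lfun_eq_Lbase_circDist (n s : ℕ) (x : ℝ) : Lfun n s x = Lbase n s (circDist x) := by
  rw [Lfun, circDist_eq_abs_toIocMod]
  simp only [Lbase, abs_abs]

lemma integral_comp_abs_eq_two_mul (f : ℝ → ℝ) {c : ℝ} (hc : 0 ≤ c) :
    ∫ x in -c..c, f |x| = 2 * ∫ x in 0..c, f x := by
  have key := integral_comp_abs (f := (Iic c).indicator f)
  have hl : (fun x => (Iic c).indicator f |x|) = (Icc (-c) c).indicator fun x => f |x| := by
    ext x
    simp only [indicator, mem_Iic, mem_Icc, abs_le]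
  rw [hl, MeasureTheory.integral_indicator measurableSet_Icc, integral_Icc_eq_integral_Ioc,
    setIntegral_indicator measurableSet_Iic, Ioi_inter_Iic, ← integral_of_le (by linarith),
    ← integral_of_le hc] at key
  exact key

lemma integral_comp_circDist_period (φ : ℝ → ℝ) (t : ℝ) :
    ∫ x in t..t + 2 * π, φ (circDist x) = 2 * ∫ y in 0..π, φ y := by
  have hper : Function.Periodic (fun x => φ (circDist x)) (2 * π) := circDist_periodic.comp φ
  rw [hper.intervalIntegral_add_eq t (-π), neg_add_eq_sub, show 2 * π - π = π by ring,
    ← integral_comp_abs_eq_two_mul φ pi_pos.le]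
  refine integral_congr fun x hx => ?_
  rw [uIcc_of_le (by linarith [pi_pos]), mem_Icc, ← abs_le] at hx
  rw [circDist_eq_abs hx]

lemma integral_comp_circDist_add (φ : ℝ → ℝ) (r : ℝ) :
    ∫ x in -π..π, φ (circDist (r + x)) = 2 * ∫ y in 0..π, φ y := by
  rw [integral_comp_add_left (fun x => φ (circDist x)), show r + π = r + -π + 2 * π by ring,
    integral_comp_circDist_period]

lemma integral_comp_circDist_sub (φ : ℝ → ℝ) (r : ℝ) :
    ∫ x in -π..π, φ (circDist (r - x)) = 2 * ∫ y in 0..π, φ y := by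
  rw [integral_comp_sub_left (fun x => φ (circDist x)), show r - -π = r - π + 2 * π by ring,
    integral_comp_circDist_period]

lemma integral_le_four_mul_of_le {f φ : ℝ → ℝ} {r₁ r₂ : ℝ}
    (hf : IntervalIntegrable f volume (-π) π) (hφ : Continuous φ)
    (h : ∀ x, f x ≤ φ (circDist (r₁ + x)) + φ (circDist (r₂ - x))) :
    ∫ x in -π..π, f x ≤ 4 * ∫ y in 0..π, φ y := by
  have hint : ∀ g : ℝ → ℝ, Continuous g →
      IntervalIntegrable (fun x => φ (circDist (g x))) volume (-π) π :=
    fun g hg => (hφ.comp (continuous_circDist.comp hg)).intervalIntegrable _ _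
  have h₁ := hint (fun x => r₁ + x) (by fun_prop)
  have h₂ := hint (fun x => r₂ - x) (by fun_prop)
  calc ∫ x in -π..π, f x
      ≤ ∫ x in -π..π, (φ (circDist (r₁ + x)) + φ (circDist (r₂ - x))) :=
        integral_mono (by linarith [pi_pos]) hf (h₁.add h₂) h
    _ = 4 * ∫ y in 0..π, φ y := by
        rw [integral_add h₁ h₂, integral_comp_circDist_add, integral_comp_circDist_sub]
        ring

section InvMax

variable {δ : ℝ}

lemma continuous_inv_max (hδ : 0 < δ) : Continuous fun y : ℝ => (max y δ)⁻¹ :=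
  (continuous_id.max continuous_const).inv₀ fun _ => (lt_max_of_lt_right hδ).ne'

lemma integral_inv_max (hδ : 0 < δ) {c : ℝ} (hc : δ ≤ c) :
    ∫ y in 0..c, (max y δ)⁻¹ = 1 + log (c / δ) := by
  have hcont := continuous_inv_max hδ
  rw [← integral_add_adjacent_intervals (hcont.intervalIntegrable 0 δ)
    (hcont.intervalIntegrable δ c)]
  have h₁ : ∫ y in 0..δ, (max y δ)⁻¹ = ∫ _ in 0..δ, δ⁻¹ :=
    integral_congr fun y hy => by rw [uIcc_of_le hδ.le] at hy; rw [max_eq_right hy.2]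
  have h₂ : ∫ y in δ..c, (max y δ)⁻¹ = ∫ y in δ..c, y⁻¹ :=
    integral_congr fun y hy => by rw [uIcc_of_le hc] at hy; rw [max_eq_left hy.1]
  rw [h₁, h₂, intervalIntegral.integral_const, integral_inv_of_pos hδ (hδ.trans_le hc),
    smul_eq_mul, sub_zero, mul_inv_cancel₀ hδ.ne']

lemma integral_inv_max_sq (hδ : 0 < δ) {c : ℝ} (hc : δ ≤ c) :
    ∫ y in 0..c, (max y δ)⁻¹ ^ 2 = 2 / δ - 1 / c := by
  have hcont : Continuous fun y : ℝ => (max y δ)⁻¹ ^ 2 := (continuous_inv_max hδ).pow 2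
  rw [← integral_add_adjacent_intervals (hcont.intervalIntegrable 0 δ)
    (hcont.intervalIntegrable δ c)]
  have h₁ : ∫ y in 0..δ, (max y δ)⁻¹ ^ 2 = ∫ _ in 0..δ, δ⁻¹ ^ 2 :=
    integral_congr fun y hy => by rw [uIcc_of_le hδ.le] at hy; rw [max_eq_right hy.2]
  have h₂ : ∫ y in δ..c, (max y δ)⁻¹ ^ 2 = ∫ y in δ..c, y ^ (-2 : ℤ) :=
    integral_congr fun y hy => by
      rw [uIcc_of_le hc] at hy; rw [max_eq_left hy.1, zpow_neg, inv_pow, zpow_ofNat]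
  have h0 : (0 : ℝ) ∉ uIcc δ c := by rw [uIcc_of_le hc]; exact fun h => hδ.not_ge h.1
  rw [h₁, h₂, intervalIntegral.integral_const, integral_zpow (Or.inr ⟨by norm_num, h0⟩),
    smul_eq_mul]
  norm_num
  field_simp
  ring

end InvMax

noncomputable def circKernel (δ x : ℝ) : ℝ := (max (circDist x) δ)⁻¹

section CircKernel

variable {δ : ℝ}

lemma continuous_circKernel (hδ : 0 < δ) : Continuous (circKernel δ) :=
  (continuous_inv_max hδ).comp continuous_circDist

lemma circKernel_nonneg (hδ : 0 < δ) (x : ℝ) : 0 ≤ circKernel δ x :=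
  inv_nonneg.2 (hδ.le.trans (le_max_right _ _))

lemma min_circKernel_inv_eq (hδ : 0 < δ) {t : ℝ} (h : δ ≤ t) (x : ℝ) :
    min (circKernel δ x) t⁻¹ = circKernel t x := by
  unfold circKernel
  rcases le_total (circDist x) t with hxt | hxt
  · rw [max_eq_right hxt, min_eq_right (inv_anti₀ (lt_max_of_lt_right hδ) (max_le hxt h))]
  · rw [max_eq_left hxt, max_eq_left (h.trans hxt),
      min_eq_left (inv_anti₀ (hδ.trans_le h) hxt)]

lemma min_circKernel_le (hδ : 0 < δ) (x y : ℝ) :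
    min (circKernel δ x) (circKernel δ y) ≤ 2 * circKernel δ (x + y) := by
  have key : ∀ z, circDist (x + y) ≤ 2 * circDist z →
      circKernel δ z ≤ 2 * circKernel δ (x + y) := fun z hz => by
    have hpos : 0 < max (circDist (x + y)) δ := lt_max_of_lt_right hδ
    calc circKernel δ z ≤ (max (circDist (x + y)) δ / 2)⁻¹ :=
          inv_anti₀ (by positivity) <| (div_le_iff₀' two_pos).2 <|
            max_le (by linarith [le_max_left (circDist z) δ])
              (by linarith [le_max_right (circDist z) δ])
      _ = 2 * circKernel δ (x + y) := by rw [inv_div, div_eq_mul_inv, circKernel]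
  have := circDist_add_le x y
  rcases le_total (circDist x) (circDist y) with h | h
  · exact (min_le_right _ _).trans (key y (by linarith))
  · exact (min_le_left _ _).trans (key x (by linarith))

end CircKernel

lemma mul_le_of_min_le {u v c : ℝ} (h : min u v ≤ c) :
    u * v ≤ c * ((u - min u c) + (v - min v c)) + (min u c ^ 2 + min v c ^ 2) / 2 := by
  rcases le_total u v with huv | huv
  · rw [min_eq_left huv] at h
    rw [min_eq_left h]
    nlinarith [min_le_left v c, min_le_right v c, sq_nonneg (u - min v c)]
  · rw [min_eq_right huv] at h
    rw [min_eq_left h]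
    nlinarith [min_le_left u c, min_le_right u c, sq_nonneg (v - min u c)]

lemma sq_mul_sq_le_of_min_le {u v w : ℝ} (hu : 0 ≤ u) (hv : 0 ≤ v) (h : min u v ≤ w) :
    u ^ 2 * v ^ 2 ≤ w ^ 2 * (u ^ 2 + v ^ 2) := by
  rcases le_total u v with huv | huv
  · rw [min_eq_left huv] at h
    nlinarith [pow_le_pow_left₀ hu h 2, sq_nonneg u, sq_nonneg v, sq_nonneg w]
  · rw [min_eq_right huv] at h
    nlinarith [pow_le_pow_left₀ hv h 2, sq_nonneg u, sq_nonneg v, sq_nonneg w]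

section Convolution

variable {δ : ℝ}

lemma intervalIntegrable_circKernel_mul (hδ : 0 < δ) (r₁ r₂ : ℝ) :
    IntervalIntegrable (fun x => circKernel δ (r₁ + x) * circKernel δ (r₂ - x)) volume (-π) π :=
  have hK := continuous_circKernel hδ
  ((hK.comp (continuous_const_add r₁)).mul (hK.comp (continuous_sub_left r₂))).intervalIntegrable
    _ _

lemma integral_circKernel_mul_le (hδ : 0 < δ) (hδπ : δ ≤ π) (r₁ r₂ : ℝ) :
    ∫ x in -π..π, circKernel δ (r₁ + x) * circKernel δ (r₂ - x) ≤ 4 / δ := by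
  calc _ ≤ 4 * ∫ y in 0..π, (max y δ)⁻¹ ^ 2 / 2 :=
        integral_le_four_mul_of_le (r₁ := r₁) (r₂ := r₂)
          (intervalIntegrable_circKernel_mul hδ r₁ r₂) (((continuous_inv_max hδ).pow 2).div_const 2)
          fun x => by
            show _ ≤ circKernel δ (r₁ + x) ^ 2 / 2 + circKernel δ (r₂ - x) ^ 2 / 2
            linarith [two_mul_le_add_sq (circKernel δ (r₁ + x)) (circKernel δ (r₂ - x))]
    _ ≤ 4 / δ := by
        rw [intervalIntegral.integral_div, integral_inv_max_sq hδ hδπ]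
        have := pi_pos
        field_simp
        linarith

lemma circKernel_mul_le (hδ : 0 < δ) {t x y : ℝ} (hδt : δ ≤ t) (h : 2 * t ≤ circDist (x + y)) :
    circKernel δ x * circKernel δ y ≤
      t⁻¹ * (circKernel δ x - circKernel t x) + circKernel t x ^ 2 / 2 +
        (t⁻¹ * (circKernel δ y - circKernel t y) + circKernel t y ^ 2 / 2) := by
  have hmin : min (circKernel δ x) (circKernel δ y) ≤ t⁻¹ := by
    refine (min_circKernel_le hδ x y).trans ?_
    rw [circKernel, ← div_eq_mul_inv, ← inv_div]
    exact inv_anti₀ (hδ.trans_le hδt) (by linarith [le_max_left (circDist (x + y)) δ])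
  have := mul_le_of_min_le hmin
  rw [min_circKernel_inv_eq hδ hδt, min_circKernel_inv_eq hδ hδt] at this
  linarith

lemma integral_circKernel_mul_le_of_two_mul_le (hδ : 0 < δ) {t r₁ r₂ : ℝ} (hδt : δ ≤ t)
    (htπ : t ≤ π) (hD : 2 * t ≤ circDist (r₁ + r₂)) :
    ∫ x in -π..π, circKernel δ (r₁ + x) * circKernel δ (r₂ - x) ≤ 4 * (log (t / δ) + 1) / t := by
  have ht : 0 < t := hδ.trans_le hδt
  have hKδ := continuous_inv_max hδ
  have hKt := continuous_inv_max ht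
  set φ : ℝ → ℝ := fun y => t⁻¹ * ((max y δ)⁻¹ - (max y t)⁻¹) + (max y t)⁻¹ ^ 2 / 2 with hφ
  have hφint : ∫ y in 0..π, φ y ≤ (log (t / δ) + 1) / t := by
    simp only [hφ]
    rw [intervalIntegral.integral_add, intervalIntegral.integral_const_mul,
      intervalIntegral.integral_sub, intervalIntegral.integral_div,
      integral_inv_max hδ (hδt.trans htπ), integral_inv_max ht htπ, integral_inv_max_sq ht htπ]
    · have hlog : t⁻¹ * (1 + log (π / δ) - (1 + log (π / t))) = log (t / δ) / t := by
        rw [log_div pi_pos.ne' hδ.ne', log_div pi_pos.ne' ht.ne', log_div ht.ne' hδ.ne']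
        ring
      rw [hlog, add_div]
      have := one_div_pos.2 pi_pos
      field_simp
      linarith
    all_goals exact Continuous.intervalIntegrable (by fun_prop) _ _
  calc _ ≤ 4 * ∫ y in 0..π, φ y :=
        integral_le_four_mul_of_le (intervalIntegrable_circKernel_mul hδ r₁ r₂) (by fun_prop)
          fun x => circKernel_mul_le hδ hδt (by rwa [add_add_sub_cancel])
    _ ≤ 4 * (log (t / δ) + 1) / t := by rw [mul_div_assoc]; gcongr

lemma integral_circKernel_sq_mul_sq_le (hδ : 0 < δ) (hδπ : δ ≤ π) (r₁ r₂ : ℝ) :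
    ∫ x in -π..π, circKernel δ (r₁ + x) ^ 2 * circKernel δ (r₂ - x) ^ 2 ≤
      32 / δ * circKernel δ (r₁ + r₂) ^ 2 := by
  set w := 2 * circKernel δ (r₁ + r₂)
  have hK := continuous_circKernel hδ
  have hint : IntervalIntegrable (fun x => circKernel δ (r₁ + x) ^ 2 * circKernel δ (r₂ - x) ^ 2)
      volume (-π) π :=
    (((hK.comp (continuous_const_add r₁)).pow 2).mul
      ((hK.comp (continuous_sub_left r₂)).pow 2)).intervalIntegrable _ _
  calc _ ≤ 4 * ∫ y in 0..π, w ^ 2 * (max y δ)⁻¹ ^ 2 :=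
        integral_le_four_mul_of_le (r₁ := r₁) (r₂ := r₂) hint
          (continuous_const.mul ((continuous_inv_max hδ).pow 2)) fun x => by
            have hmin := min_circKernel_le hδ (r₁ + x) (r₂ - x)
            rw [add_add_sub_cancel] at hmin
            exact sq_mul_sq_le_of_min_le (circKernel_nonneg hδ _) (circKernel_nonneg hδ _) hmin
              |>.trans_eq (mul_add _ _ _)
    _ ≤ 32 / δ * circKernel δ (r₁ + r₂) ^ 2 := by
        rw [intervalIntegral.integral_const_mul, integral_inv_max_sq hδ hδπ]
        have : 0 ≤ w ^ 2 / π := by positivity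
        calc 4 * (w ^ 2 * (2 / δ - 1 / π)) = 2 / δ * w ^ 2 * 4 - 4 * (w ^ 2 / π) := by ring
          _ ≤ 2 / δ * w ^ 2 * 4 := by linarith
          _ = 32 / δ * circKernel δ (r₁ + r₂) ^ 2 := by ring

end Convolution

-- Also for `n = 0`, where both sides are `(circDist x)⁻¹` because `x / 0 = 0` and `0⁻¹ = 0`.
lemma Lfun_zero_eq (n : ℕ) (x : ℝ) : Lfun n 0 x = circKernel (n : ℝ)⁻¹ x := by
  rw [Lfun_eq_Lbase_circDist, Lbase, circKernel]
  simp only [CharP.cast_eq_zero, exp_zero, neg_zero, one_mul, pow_zero, one_div,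
    abs_of_nonneg (circDist_nonneg x)]
  split_ifs with h
  · rw [max_eq_right h, inv_inv]
  · rw [max_eq_left (not_le.1 h).le]

lemma Lfun_one_eq (n : ℕ) (x : ℝ) : Lfun n 1 x = if circDist x ≤ exp 1 / n then exp (-1) * n
    else log (n * circDist x) / circDist x := by
  rw [Lfun_eq_Lbase_circDist, Lbase, abs_of_nonneg (circDist_nonneg x), Nat.cast_one, pow_one]

lemma Lfun_one_nonneg (n : ℕ) (x : ℝ) : 0 ≤ Lfun n 1 x := by
  rw [Lfun_one_eq]
  split_ifs with h
  · positivity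
  rcases n.eq_zero_or_pos with rfl | hn
  · simp
  rw [not_le, div_lt_iff₀' (by positivity)] at h
  exact div_nonneg (log_nonneg (by linarith [add_one_le_exp 1])) (circDist_nonneg x)

lemma inv_natCast_le_pi {n : ℕ} (hn : 0 < n) : (n : ℝ)⁻¹ ≤ π :=
  (inv_le_one_of_one_le₀ (by exact_mod_cast hn)).trans (by linarith [pi_gt_three])

lemma integral_Lfun_zero_mul_le {n : ℕ} (hn : 0 < n) (r₁ r₂ : ℝ) :
    ∫ x in -π..π, Lfun n 0 (r₁ + x) * Lfun n 0 (r₂ - x) ≤ 16 * Lfun n 1 (r₁ + r₂) := by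
  have hδ : (0 : ℝ) < (n : ℝ)⁻¹ := by positivity
  have hN : (0 : ℝ) < n := by exact_mod_cast hn
  simp only [Lfun_zero_eq, Lfun_one_eq]
  set D := circDist (r₁ + r₂)
  split_ifs with hD
  · refine (integral_circKernel_mul_le hδ (inv_natCast_le_pi hn) r₁ r₂).trans ?_
    have he : 1 / 4 ≤ exp (-1) := by
      rw [exp_neg, one_div]; exact inv_anti₀ (exp_pos 1) (by linarith [exp_one_lt_d9])
    rw [div_inv_eq_mul]
    nlinarith
  · rw [not_le, div_lt_iff₀ hN] at hD
    have he : 2 < exp 1 := by linarith [exp_one_gt_d9]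
    have hDpos : 0 < D := by nlinarith [exp_pos 1]
    have hlog : 1 ≤ log (n * D) := by
      rw [le_log_iff_exp_le (by positivity)]; linarith
    refine (integral_circKernel_mul_le_of_two_mul_le (t := D / 2) hδ ?_ ?_ (by linarith)).trans ?_
    · rw [inv_le_iff_one_le_mul₀ hN]; linarith
    · linarith [circDist_le_pi (r₁ + r₂), circDist_nonneg (r₁ + r₂)]
    · have : log (D / 2 / (n : ℝ)⁻¹) ≤ log (n * D) :=
        log_le_log (by positivity) (by rw [div_inv_eq_mul]; nlinarith)
      calc 4 * (log (D / 2 / (n : ℝ)⁻¹) + 1) / (D / 2)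
          = 8 * (log (D / 2 / (n : ℝ)⁻¹) + 1) / D := by field_simp; ring
        _ ≤ 8 * (2 * log (n * D)) / D := by gcongr; linarith
        _ = 16 * (log (n * D) / D) := by ring

lemma integral_Lfun_zero_sq_mul_sq_le {n : ℕ} (hn : 0 < n) (r₁ r₂ : ℝ) :
    ∫ x in -π..π, Lfun n 0 (r₁ + x) ^ 2 * Lfun n 0 (r₂ - x) ^ 2 ≤
      32 * n * Lfun n 0 (r₁ + r₂) ^ 2 := by
  simp only [Lfun_zero_eq]
  refine (integral_circKernel_sq_mul_sq_le (by positivity) (inv_natCast_le_pi hn) r₁ r₂).trans_eq ?_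
  rw [div_inv_eq_mul]

/-- **Lemma 1(iv)** (Nordman–Lahiri). There is a constant `C` such that for all `n ≥ 2` and
all `r₁, r₂ ∈ ℝ`: `∫_{−π}^{π} L_{n0}(r₁+λ) L_{n0}(r₂−λ) dλ ≤ C L_{n1}(r₁+r₂)` and
`∫_{−π}^{π} L_{n0}²(r₁+λ) L_{n0}²(r₂−λ) dλ ≤ C n L_{n0}²(r₁+r₂)`. -/
theorem lfun_convolution_bounds :
    ∃ C : ℝ, ∀ n : ℕ, 2 ≤ n → ∀ r₁ r₂ : ℝ,
      (∫ lam in (-π)..π, Lfun n 0 (r₁ + lam) * Lfun n 0 (r₂ - lam)) ≤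
        C * Lfun n 1 (r₁ + r₂) ∧
      (∫ lam in (-π)..π, (Lfun n 0 (r₁ + lam)) ^ 2 * (Lfun n 0 (r₂ - lam)) ^ 2) ≤
        C * n * (Lfun n 0 (r₁ + r₂)) ^ 2 := by
  refine ⟨32, fun n hn r₁ r₂ => ⟨?_, integral_Lfun_zero_sq_mul_sq_le (by omega) r₁ r₂⟩⟩
  calc _ ≤ 16 * Lfun n 1 (r₁ + r₂) := integral_Lfun_zero_mul_le (by omega) r₁ r₂
    _ ≤ 32 * Lfun n 1 (r₁ + r₂) := by linarith [Lfun_one_nonneg n (r₁ + r₂)]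
end
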